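/- For nonnegative integers m1, m2, k1, k2, the double-indexed poly-Bernoulli numbers with negative upper indices satisfy the duality B_{m1,m2}^{(-k1,-k2)} = B_{k1,k2}^{(-m1,-m2)}. -/

import Mathlib

/-!
The binomial theorem applied to `(m₁+1)^{k₁}(m₁+m₂+2)^{k₂} = (m₁+1)^{k₁}((m₁+1)+(m₂+1))^{k₂}` turns
the defining double sum into a convolution
`B_{ℓ₁,ℓ₂}^{(-k₁,-k₂)} = ∑_{n,p} C(ℓ₂,n-ℓ₁) C(k₂,p-k₁) B_n^{(-p)} B_{ℓ₁+ℓ₂-n}^{(-(k₁+k₂-p))}`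
of the single-index numbers `B_n^{(-k)} = (-1)^n ∑_m (-1)^m m! S(n,m) (m+1)^k`. This convolution is
symmetric under `(ℓ, n) ↔ (k, p)` by Kaneko's duality `B_n^{(-k)} = B_k^{(-n)}`, which in turn is
read off the symmetric closed form `B_n^{(-k)} = ∑_j (j!)² S(n+1,j+1) S(k+1,j+1)`. That closed form
comes from expanding `(m+1)^k = ∑_j j! S(k+1,j+1) C(m,j)` and summing against
`∑_m (-1)^m m! C(m,j) S(n,m) = (-1)^n j! S(n+1,j+1)`.
-/

/-- Stirling numbers of the second kind. -/
def S2 : ℕ → ℕ → ℕ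
  | 0, 0 => 1
  | 0, _ + 1 => 0
  | _ + 1, 0 => 0
  | n + 1, m + 1 => S2 n m + (m + 1) * S2 n (m + 1)
/-- Double-indexed poly-Bernoulli number with negative upper indices
`B_{ℓ1,ℓ2}^{(-k1,-k2)}`, via the explicit formula of Theorem 2.1. -/
def B2negA (l1 l2 k1 k2 : ℕ) : ℤ :=
  ∑ m1 ∈ Finset.range (l1 + l2 + 1), ∑ m2 ∈ Finset.range (l1 + l2 + 1),
    (-1 : ℤ) ^ (m1 + m2 + l1 + l2) * (Nat.factorial m1 : ℤ) * (Nat.factorial m2 : ℤ) *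
      ((m1 : ℤ) + 1) ^ k1 * ((m1 : ℤ) + (m2 : ℤ) + 2) ^ k2 *
      ∑ n ∈ Finset.range (l1 + l2 + 1),
        (S2 n m1 : ℤ) * (S2 (l1 + l2 - n) m2 : ℤ) *
          (if l1 ≤ n then (Nat.choose l2 (n - l1) : ℤ) else 0)

open Finset Nat

theorem Finset.sum_range_eq_sum_range_of_le {M : Type*} [AddCommMonoid M] {f : ℕ → M}
    {a b : ℕ} (hab : a ≤ b) (hf : ∀ i, a ≤ i → f i = 0) :
    ∑ i ∈ range a, f i = ∑ i ∈ range b, f i :=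
  sum_subset (range_subset_range.2 hab) fun i _ hi => hf i (by simpa using hi)

theorem Finset.sum_range_add_one_eq_sum_range {M : Type*} [AddCommMonoid M] (f : ℕ → M) (n : ℕ)
    (h0 : f 0 = 0) (hn : f n = 0) : ∑ i ∈ range n, f (i + 1) = ∑ i ∈ range n, f i := by
  rw [← add_zero (∑ i ∈ range n, f (i + 1)), ← h0, ← sum_range_succ', sum_range_succ, hn, add_zero]

theorem sum_range_ite_choose_mul {R : Type*} [CommSemiring R] (a b : ℕ) (g : ℕ → R) :
    ∑ n ∈ range (a + b + 1), (if a ≤ n then (b.choose (n - a) : R) else 0) * g n =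
      ∑ i ∈ range (b + 1), b.choose i * g (a + i) := by
  rw [add_assoc, sum_range_add, sum_eq_zero fun n hn => by simp [not_le.2 (mem_range.1 hn)],
    zero_add]
  simp

theorem add_one_pow_mul_add_add_two_pow {R : Type*} [CommSemiring R] (k1 k2 : ℕ) (x y : R) :
    (x + 1) ^ k1 * (x + y + 2) ^ k2 = ∑ p ∈ range (k1 + k2 + 1),
      (if k1 ≤ p then (k2.choose (p - k1) : R) else 0) *
        ((x + 1) ^ p * (y + 1) ^ (k1 + k2 - p)) := by
  rw [sum_range_ite_choose_mul, show x + y + 2 = (x + 1) + (y + 1) by ring,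
    add_pow (x + 1) (y + 1) k2, mul_sum]
  refine sum_congr rfl fun i _ => ?_
  rw [Nat.add_sub_add_left, pow_add]
  ring

theorem Nat.add_one_mul_add_one_choose_add_one (m j : ℕ) :
    (m + 1) * (m + 1).choose (j + 1) = (m + j + 2) * m.choose (j + 1) + (j + 1) * m.choose j := by
  have h := add_one_mul_choose_eq m j
  rw [choose_succ_succ] at h ⊢
  linarith

theorem S2_eq_stirlingSecond : S2 = stirlingSecond := by
  funext n m
  induction n generalizing m with
  | zero => cases m <;> rfl
  | succ n ih =>
    cases m with
    | zero => rfl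
    | succ m => rw [S2, stirlingSecond_succ_succ, ih, ih, add_comm]

namespace Nat

theorem add_one_pow_eq_sum_stirlingSecond (x n : ℕ) :
    (x + 1) ^ n = ∑ j ∈ range (n + 1), j ! * stirlingSecond (n + 1) (j + 1) * x.choose j := by
  induction n with
  | zero => simp [stirlingSecond_self]
  | succ n ih =>
    have hmul (j : ℕ) : j ! * stirlingSecond (n + 1) (j + 1) * x.choose j * (x + 1) =
        (j + 1)! * stirlingSecond (n + 1) (j + 1) * x.choose j +
          (j + 1)! * stirlingSecond (n + 1) (j + 1) * x.choose (j + 1) := by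
      rw [mul_assoc, mul_comm _ (x + 1), add_one_mul_choose_eq, choose_succ_succ, factorial_succ]
      ring
    have hrec (j : ℕ) : j ! * stirlingSecond (n + 1 + 1) (j + 1) * x.choose j =
        (j + 1)! * stirlingSecond (n + 1) (j + 1) * x.choose j +
          j ! * stirlingSecond (n + 1) j * x.choose j := by
      rw [stirlingSecond_succ_succ, factorial_succ]
      ring
    rw [pow_succ, ih, sum_mul, sum_congr rfl fun j _ => hmul j, sum_add_distrib,
      sum_congr rfl fun j _ => hrec j, sum_add_distrib, sum_range_succ _ (n + 1),
      sum_range_succ' (fun j => j ! * stirlingSecond (n + 1) j * x.choose j),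
      stirlingSecond_eq_zero_of_lt (lt_add_one (n + 1))]
    simp

theorem sum_range_mul_stirlingSecond_succ {R : Type*} [CommSemiring R] (N : ℕ) (a : ℕ → R) :
    ∑ m ∈ range (N + 1 + 1), a m * stirlingSecond (N + 1) m =
      ∑ m ∈ range (N + 1), (a m * m + a (m + 1)) * stirlingSecond N m := by
  have hshift := sum_range_add_one_eq_sum_range (fun m => a m * m * stirlingSecond N m) (N + 1)
    (by simp) (by simp [stirlingSecond_eq_zero_of_lt (lt_add_one N)])
  calc ∑ m ∈ range (N + 1 + 1), a m * stirlingSecond (N + 1) m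
      = ∑ m ∈ range (N + 1), (a (m + 1) * (m + 1 : ℕ) * stirlingSecond N (m + 1) +
          a (m + 1) * stirlingSecond N m) := by
        simp only [sum_range_succ' _ (N + 1), stirlingSecond_succ_succ, stirlingSecond_succ_zero]
        push_cast
        ring_nf
    _ = _ := by
        rw [sum_add_distrib, hshift, ← sum_add_distrib]
        simp only [add_mul]

theorem sum_neg_one_pow_mul_factorial_mul_choose_mul_stirlingSecond {R : Type*} [CommRing R]
    (N j : ℕ) :
    ∑ m ∈ range (N + 1), (-1 : R) ^ m * m ! * m.choose j * stirlingSecond N m =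
      (-1) ^ N * j ! * stirlingSecond (N + 1) (j + 1) := by
  induction N generalizing j with
  | zero => cases j <;> simp [stirlingSecond_succ_succ]
  | succ N ih =>
    rw [sum_range_mul_stirlingSecond_succ]
    cases j with
    | zero =>
      have hcoef (m : ℕ) : (-1 : R) ^ m * m ! * m.choose 0 * m +
          (-1) ^ (m + 1) * (m + 1)! * (m + 1).choose 0 = -((-1) ^ m * m ! * m.choose 0) := by
        push_cast [factorial_succ, choose_zero_right]
        ring
      simp only [hcoef, neg_mul, sum_neg_distrib, ih, stirlingSecond_succ_succ (N + 1) 0,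
        stirlingSecond_succ_zero]
      push_cast
      ring
    | succ i =>
      have hcoef (m : ℕ) : (-1 : R) ^ m * m ! * m.choose (i + 1) * m +
          (-1) ^ (m + 1) * (m + 1)! * (m + 1).choose (i + 1) =
            -(i + 2) * ((-1) ^ m * m ! * m.choose (i + 1)) -
              (i + 1) * ((-1) ^ m * m ! * m.choose i) := by
        have h := congrArg (Nat.cast : ℕ → R) (add_one_mul_add_one_choose_add_one m i)
        push_cast [factorial_succ] at h ⊢
        linear_combination (-1 : R) ^ (m + 1) * m ! * h
      simp only [hcoef, sub_mul, sum_sub_distrib, mul_assoc (-((i : R) + 2)),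
        mul_assoc ((i : R) + 1), ← mul_sum, ih, stirlingSecond_succ_succ (N + 1) (i + 1)]
      push_cast [factorial_succ]
      ring

end Nat

/-- `B_n^{(-k)}`, by Kaneko's formula. -/
def polyBernoulliNeg (n k : ℕ) : ℤ :=
  ∑ m ∈ range (n + 1), (-1) ^ (m + n) * m ! * ((m : ℤ) + 1) ^ k * stirlingSecond n m

theorem polyBernoulliNeg_eq_sum_range_of_lt {n P : ℕ} (k : ℕ) (hn : n < P) :
    ∑ m ∈ range P, (-1) ^ (m + n) * m ! * ((m : ℤ) + 1) ^ k * stirlingSecond n m =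
      polyBernoulliNeg n k :=
  (sum_range_eq_sum_range_of_le hn fun m hm => by
    simp [stirlingSecond_eq_zero_of_lt (by omega : n < m)]).symm

theorem polyBernoulliNeg_eq_sum (n k : ℕ) :
    polyBernoulliNeg n k = ∑ j ∈ range (n + k + 1),
      (j ! : ℤ) ^ 2 * stirlingSecond (n + 1) (j + 1) * stirlingSecond (k + 1) (j + 1) := by
  have hpow (m : ℕ) : ((m : ℤ) + 1) ^ k =
      ∑ j ∈ range (k + 1), (j ! : ℤ) * stirlingSecond (k + 1) (j + 1) * m.choose j := by
    exact_mod_cast add_one_pow_eq_sum_stirlingSecond m k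
  have hsign : ((-1 : ℤ) ^ n) ^ 2 = 1 := by rw [← pow_mul, pow_mul', neg_one_sq, one_pow]
  calc polyBernoulliNeg n k
      = ∑ m ∈ range (n + 1), ∑ j ∈ range (k + 1),
          (-1 : ℤ) ^ n * (j ! * stirlingSecond (k + 1) (j + 1)) *
            ((-1) ^ m * m ! * m.choose j * stirlingSecond n m) := by
        simp only [polyBernoulliNeg, hpow, mul_sum, sum_mul, pow_add]
        exact sum_congr rfl fun m _ => sum_congr rfl fun j _ => by ring
    _ = ∑ j ∈ range (k + 1),
          (j ! : ℤ) ^ 2 * stirlingSecond (n + 1) (j + 1) * stirlingSecond (k + 1) (j + 1) := by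
        rw [sum_comm]
        simp only [← mul_sum, sum_neg_one_pow_mul_factorial_mul_choose_mul_stirlingSecond]
        exact sum_congr rfl fun j _ => by
          linear_combination
            (j ! : ℤ) ^ 2 * stirlingSecond (n + 1) (j + 1) * stirlingSecond (k + 1) (j + 1) * hsign
    _ = _ := sum_range_eq_sum_range_of_le (by omega) fun j hj => by
        simp [stirlingSecond_eq_zero_of_lt (by omega : k + 1 < j + 1)]

theorem polyBernoulliNeg_comm (n k : ℕ) : polyBernoulliNeg n k = polyBernoulliNeg k n := by
  rw [polyBernoulliNeg_eq_sum, polyBernoulliNeg_eq_sum, add_comm n k]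
  exact sum_congr rfl fun j _ => mul_right_comm _ _ _

theorem B2negA_eq_sum_polyBernoulliNeg (l1 l2 k1 k2 : ℕ) :
    B2negA l1 l2 k1 k2 = ∑ n ∈ range (l1 + l2 + 1), ∑ p ∈ range (k1 + k2 + 1),
      (if l1 ≤ n then (l2.choose (n - l1) : ℤ) else 0) *
        (if k1 ≤ p then (k2.choose (p - k1) : ℤ) else 0) *
        (polyBernoulliNeg n p * polyBernoulliNeg (l1 + l2 - n) (k1 + k2 - p)) := by
  set c : ℕ → ℕ → ℕ → ℤ := fun a b n => if a ≤ n then (b.choose (n - a) : ℤ) else 0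
  set f : ℕ → ℕ → ℕ → ℤ := fun n k m =>
    (-1) ^ (m + n) * m ! * ((m : ℤ) + 1) ^ k * stirlingSecond n m
  have hterm (m1 m2 n : ℕ) (hn : n ≤ l1 + l2) :
      (-1 : ℤ) ^ (m1 + m2 + l1 + l2) * m1 ! * m2 ! * ((m1 : ℤ) + 1) ^ k1 *
        ((m1 : ℤ) + m2 + 2) ^ k2 *
          (stirlingSecond n m1 * stirlingSecond (l1 + l2 - n) m2 * c l1 l2 n) =
      ∑ p ∈ range (k1 + k2 + 1), c l1 l2 n * c k1 k2 p *
        (f n p m1 * f (l1 + l2 - n) (k1 + k2 - p) m2) := by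
    have hsign :
        (-1 : ℤ) ^ (m1 + m2 + l1 + l2) = (-1) ^ (m1 + n) * (-1) ^ (m2 + (l1 + l2 - n)) := by
      rw [← pow_add]; congr 1; omega
    rw [mul_assoc _ (((m1 : ℤ) + 1) ^ k1), add_one_pow_mul_add_add_two_pow, hsign, mul_sum, sum_mul]
    exact sum_congr rfl fun p _ => by ring
  calc B2negA l1 l2 k1 k2
      = ∑ m1 ∈ range (l1 + l2 + 1), ∑ m2 ∈ range (l1 + l2 + 1), ∑ n ∈ range (l1 + l2 + 1),
          ∑ p ∈ range (k1 + k2 + 1), c l1 l2 n * c k1 k2 p *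
            (f n p m1 * f (l1 + l2 - n) (k1 + k2 - p) m2) := by
        simp only [B2negA, S2_eq_stirlingSecond, mul_sum]
        exact sum_congr rfl fun m1 _ => sum_congr rfl fun m2 _ => sum_congr rfl fun n hn =>
          hterm m1 m2 n (Nat.lt_succ_iff.1 (mem_range.1 hn))
    _ = ∑ n ∈ range (l1 + l2 + 1), ∑ p ∈ range (k1 + k2 + 1), ∑ m1 ∈ range (l1 + l2 + 1),
          ∑ m2 ∈ range (l1 + l2 + 1), c l1 l2 n * c k1 k2 p *
            (f n p m1 * f (l1 + l2 - n) (k1 + k2 - p) m2) := by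
        rw [sum_comm_cycle]
        exact sum_congr rfl fun n _ => sum_comm_cycle
    _ = _ := by
        refine sum_congr rfl fun n hn => sum_congr rfl fun p _ => ?_
        rw [← polyBernoulliNeg_eq_sum_range_of_lt p (mem_range.1 hn),
          ← polyBernoulliNeg_eq_sum_range_of_lt (k1 + k2 - p)
            (by omega : l1 + l2 - n < l1 + l2 + 1),
          sum_mul_sum, mul_sum]
        simp only [mul_sum]
        rfl

/-- Duality of double-indexed poly-Bernoulli numbers with negative upper
indices: `B_{m1,m2}^{(-k1,-k2)} = B_{k1,k2}^{(-m1,-m2)}`. -/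
theorem doublePolyBernoulli_duality (m1 m2 k1 k2 : ℕ) :
    B2negA m1 m2 k1 k2 = B2negA k1 k2 m1 m2 := by
  rw [B2negA_eq_sum_polyBernoulliNeg, B2negA_eq_sum_polyBernoulliNeg, sum_comm]
  refine sum_congr rfl fun p _ => sum_congr rfl fun n _ => ?_
  rw [polyBernoulliNeg_comm n p, polyBernoulliNeg_comm (m1 + m2 - n)]
  ring
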